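/- Let (S_t)_{t≥1} be a Markov chain controlled by a stationary policy with per-step expected cost c(s) ∈ [0,1], uniform gain g (i.e., the Poisson equation g = c(s) + E_{s'∼P(s)}[v(s')] - v(s) holds for all s), and bias function v with span at most H (i.e., sup_{s,s'} |v(s) - v(s')| ≤ H). Then for any trajectory of length T and any δ > 0, with probability at least 1 - δ, |(1/T) ∑_{t=1}^T c(S_t) - g| ≤ H/T + H √(2 log(2/δ)/T). -/

import Mathlib

open MeasureTheory ProbabilityTheory

open Finset


lemma integrable_of_abs_bound {Ω : Type*} {m : MeasurableSpace Ω} {μ : Measure Ω}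
    [IsFiniteMeasure μ] {f : Ω → ℝ} (hf : Measurable f) (C : ℝ) (h : ∀ ω, |f ω| ≤ C) :
    Integrable f μ :=
  ⟨hf.aestronglyMeasurable, HasFiniteIntegral.of_bounded
    (ae_of_all _ (by simpa [Real.norm_eq_abs] using h))⟩

lemma exp_le_cosh_add (l H d : ℝ) (hH : 0 < H) (hd : |d| ≤ H) :
    Real.exp (l * d) ≤ Real.cosh (l*H) + Real.sinh (l*H) * (d/H) := by
  obtain ⟨h1, h2⟩ := abs_le.mp hd
  set θ : ℝ := (H + d)/(2*H) with hθ
  have hθ0 : 0 ≤ θ := div_nonneg (by linarith) (by linarith)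
  have hθ1 : 0 ≤ 1 - θ := by
    rw [hθ, sub_nonneg, div_le_one (by linarith)]; linarith
  have key := convexOn_exp.2 (Set.mem_univ (l*H)) (Set.mem_univ (-(l*H))) hθ0 hθ1
    (by ring : θ + (1-θ) = 1)
  simp only [smul_eq_mul] at key
  have harg : θ * (l*H) + (1-θ) * (-(l*H)) = l * d := by
    have h2H : θ * (2*H) = H + d := div_mul_cancel₀ _ (by positivity)
    linear_combination l * h2H
  rw [harg] at key
  refine key.trans (le_of_eq ?_)
  rw [Real.cosh_eq, Real.sinh_eq, hθ]
  field_simp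
  ring

lemma azuma_mgf {Ω : Type*} {m : MeasurableSpace Ω} {μ : Measure Ω}
    [IsProbabilityMeasure μ] (G : Filtration ℕ m) (D : ℕ → Ω → ℝ) (H : ℝ) (hH : 0 < H)
    (hmeas : ∀ t, Measurable[G (t+1)] (D t))
    (hbd : ∀ t ω, |D t ω| ≤ H)
    (hcond : ∀ t, μ[D t | G t] =ᵐ[μ] 0)
    (l : ℝ) (n : ℕ) :
    ∫ ω, Real.exp (l * ∑ k ∈ range n, D k ω) ∂μ ≤ (Real.cosh (l*H))^n := by
  -- measurability of D t wrt m
  have hDm : ∀ t, Measurable (D t) := fun t => (hmeas t).mono (G.le _) le_rfl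
  have hXmeas : ∀ n, Measurable[G n] (fun ω => ∑ k ∈ range n, D k ω) := by
    intro n
    apply Finset.measurable_sum
    intro k hk
    exact ((hmeas k).mono (G.mono (mem_range.mp hk)) le_rfl)
  have hXbd : ∀ n ω, |∑ k ∈ range n, D k ω| ≤ n * H := by
    intro n ω
    calc |∑ k ∈ range n, D k ω| ≤ ∑ k ∈ range n, |D k ω| := Finset.abs_sum_le_sum_abs _ _
    _ ≤ ∑ k ∈ range n, H := Finset.sum_le_sum (fun k _ => hbd k ω)
    _ = n * H := by simp [mul_comm]
  have hfbd : ∀ n ω, Real.exp (l * ∑ k ∈ range n, D k ω) ≤ Real.exp (|l| * (n*H)) := by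
    intro n ω
    apply Real.exp_le_exp.mpr
    calc l * ∑ k ∈ range n, D k ω ≤ |l * ∑ k ∈ range n, D k ω| := le_abs_self _
    _ = |l| * |∑ k ∈ range n, D k ω| := abs_mul _ _
    _ ≤ |l| * (n*H) := by
        exact mul_le_mul_of_nonneg_left (hXbd n ω) (abs_nonneg l)
  have hfint : ∀ n, Integrable (fun ω => Real.exp (l * ∑ k ∈ range n, D k ω)) μ := by
    intro n
    refine integrable_of_abs_bound (Real.measurable_exp.comp
      (((hXmeas n).mono (G.le n) le_rfl).const_mul l)) (Real.exp (|l| * (n*H))) ?_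
    intro ω
    rw [abs_of_pos (Real.exp_pos _)]
    exact hfbd n ω
  induction n with
  | zero => simp
  | succ n ih =>
      set f : Ω → ℝ := fun ω => Real.exp (l * ∑ k ∈ range n, D k ω) with hf
      have hfsm : StronglyMeasurable[G n] f :=
        (Real.measurable_exp.comp ((hXmeas n).const_mul l)).stronglyMeasurable
      have hfDint : Integrable (fun ω => f ω * D n ω) μ := by
        refine integrable_of_abs_bound ((Real.measurable_exp.comp
          (((hXmeas n).mono (G.le n) le_rfl).const_mul l)).mul (hDm n))
          (Real.exp (|l| * (n*H)) * H) ?_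
        intro ω
        rw [abs_mul]
        exact mul_le_mul (by rw [abs_of_pos (Real.exp_pos _)]; exact hfbd n ω)
          (hbd n ω) (abs_nonneg _) (Real.exp_pos _).le
      have hDint : Integrable (D n) μ := integrable_of_abs_bound (hDm n) H (hbd n)
      -- cross term zero
      have hcross : ∫ ω, f ω * D n ω ∂μ = 0 := by
        have h1 : μ[fun ω => f ω * D n ω | G n] =ᵐ[μ] fun ω => f ω * (μ[D n | G n]) ω :=
          condExp_mul_of_stronglyMeasurable_left hfsm hfDint hDint
        have h2 : (fun ω => f ω * (μ[D n | G n]) ω) =ᵐ[μ] (fun _ => (0:ℝ)) := by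
          filter_upwards [hcond n] with ω hω
          simp [hω]
        calc ∫ ω, f ω * D n ω ∂μ = ∫ ω, (μ[fun ω => f ω * D n ω | G n]) ω ∂μ :=
              (integral_condExp (G.le n)).symm
        _ = ∫ _ω, (0:ℝ) ∂μ := integral_congr_ae (h1.trans h2)
        _ = 0 := integral_zero _ _
      -- pointwise bound
      have hpt : ∀ ω, Real.exp (l * ∑ k ∈ range (n+1), D k ω) ≤
          f ω * (Real.cosh (l*H) + Real.sinh (l*H) * (D n ω / H)) := by
        intro ω
        rw [Finset.sum_range_succ, mul_add, Real.exp_add]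
        exact mul_le_mul_of_nonneg_left (exp_le_cosh_add l H (D n ω) hH (hbd n ω))
          (Real.exp_pos _).le
      have hRint : Integrable (fun ω => f ω * (Real.cosh (l*H) + Real.sinh (l*H) * (D n ω / H))) μ := by
        have : (fun ω => f ω * (Real.cosh (l*H) + Real.sinh (l*H) * (D n ω / H)))
            = fun ω => Real.cosh (l*H) * f ω + (Real.sinh (l*H) / H) * (f ω * D n ω) := by
          funext ω; ring
        rw [this]
        exact ((hfint n).const_mul _).add (hfDint.const_mul _)
      calc ∫ ω, Real.exp (l * ∑ k ∈ range (n+1), D k ω) ∂μ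
          ≤ ∫ ω, f ω * (Real.cosh (l*H) + Real.sinh (l*H) * (D n ω / H)) ∂μ :=
            integral_mono (hfint (n+1)) hRint hpt
      _ = Real.cosh (l*H) * ∫ ω, f ω ∂μ + (Real.sinh (l*H) / H) * ∫ ω, f ω * D n ω ∂μ := by
            rw [← integral_const_mul, ← integral_const_mul, ← integral_add
              (((hfint n).const_mul _)) (hfDint.const_mul _)]
            congr 1; funext ω; ring
      _ = Real.cosh (l*H) * ∫ ω, f ω ∂μ := by rw [hcross]; ring
      _ ≤ Real.cosh (l*H) * (Real.cosh (l*H))^n :=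
            mul_le_mul_of_nonneg_left ih (by positivity)
      _ = (Real.cosh (l*H))^(n+1) := by ring

lemma azuma_tail {Ω : Type*} {m : MeasurableSpace Ω} {μ : Measure Ω}
    [IsProbabilityMeasure μ] (G : Filtration ℕ m) (D : ℕ → Ω → ℝ) (H : ℝ) (hH : 0 < H)
    (hmeas : ∀ t, Measurable[G (t+1)] (D t))
    (hbd : ∀ t ω, |D t ω| ≤ H)
    (hcond : ∀ t, μ[D t | G t] =ᵐ[μ] 0)
    (T : ℕ) (hT : 0 < T) (ε : ℝ) (hε : 0 < ε) :
    (μ {ω | ε ≤ ∑ k ∈ range T, D k ω}).toReal ≤ Real.exp (-(ε^2) / (2 * T * H^2)) := by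
  have hDm : ∀ t, Measurable (D t) := fun t => (hmeas t).mono (G.le _) le_rfl
  set l : ℝ := ε / (T * H^2) with hl
  have hTpos : (0:ℝ) < T := Nat.cast_pos.mpr hT
  have hlpos : 0 < l := div_pos hε (by positivity)
  set X : Ω → ℝ := fun ω => ∑ k ∈ range T, D k ω with hX
  have hXm : Measurable X := Finset.measurable_sum _ (fun k _ => hDm k)
  have hXbd : ∀ ω, |X ω| ≤ T * H := by
    intro ω
    calc |X ω| ≤ ∑ k ∈ range T, |D k ω| := Finset.abs_sum_le_sum_abs _ _
    _ ≤ ∑ _k ∈ range T, H := Finset.sum_le_sum (fun k _ => hbd k ω)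
    _ = T * H := by simp [mul_comm]
  have hint : Integrable (fun ω => Real.exp (l * X ω)) μ := by
    refine integrable_of_abs_bound (Real.measurable_exp.comp (hXm.const_mul l))
      (Real.exp (|l| * (T*H))) ?_
    intro ω
    rw [abs_of_pos (Real.exp_pos _), Real.exp_le_exp]
    calc l * X ω ≤ |l * X ω| := le_abs_self _
    _ = |l| * |X ω| := abs_mul _ _
    _ ≤ |l| * (T*H) := mul_le_mul_of_nonneg_left (hXbd ω) (abs_nonneg l)
  -- Markov
  have hmarkov := mul_meas_ge_le_integral_of_nonneg
    (ae_of_all μ (fun ω => (Real.exp_pos (l * X ω)).le)) hint (Real.exp (l * ε))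
  have hsub : {ω | ε ≤ X ω} ⊆ {ω | Real.exp (l * ε) ≤ Real.exp (l * X ω)} := by
    intro ω hω
    exact Real.exp_le_exp.mpr (mul_le_mul_of_nonneg_left hω hlpos.le)
  have hmono : (μ {ω | ε ≤ X ω}).toReal ≤ (μ {ω | Real.exp (l*ε) ≤ Real.exp (l * X ω)}).toReal :=
    ENNReal.toReal_mono (measure_ne_top μ _) (measure_mono hsub)
  have hmgf := azuma_mgf G D H hH hmeas hbd hcond l T
  have hcosh : (Real.cosh (l*H))^T ≤ Real.exp (T * (l*H)^2/2) := by
    calc (Real.cosh (l*H))^T ≤ (Real.exp ((l*H)^2/2))^T :=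
          pow_le_pow_left₀ (((Real.cosh_pos _).le)) (Real.cosh_le_exp_half_sq _) T
    _ = Real.exp (T * ((l*H)^2/2)) := by rw [← Real.exp_nat_mul]
    _ = Real.exp (T * (l*H)^2/2) := by ring_nf
  have key : (μ {ω | ε ≤ X ω}).toReal ≤ Real.exp (T * (l*H)^2/2 - l*ε) := by
    have h1 : Real.exp (l*ε) * (μ {ω | ε ≤ X ω}).toReal ≤ Real.exp (T * (l*H)^2/2) := by
      calc Real.exp (l*ε) * (μ {ω | ε ≤ X ω}).toReal
          ≤ Real.exp (l*ε) * (μ {ω | Real.exp (l*ε) ≤ Real.exp (l * X ω)}).toReal :=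
            mul_le_mul_of_nonneg_left hmono (Real.exp_pos _).le
      _ ≤ ∫ ω, Real.exp (l * X ω) ∂μ := hmarkov
      _ ≤ (Real.cosh (l*H))^T := hmgf
      _ ≤ Real.exp (T * (l*H)^2/2) := hcosh
    rw [Real.exp_sub, le_div_iff₀ (Real.exp_pos _)]
    linarith [h1]
  refine key.trans (le_of_eq ?_)
  congr 1
  rw [hl]
  field_simp
  ring

/-- **Concentration of the empirical average cost via the Poisson equation**
(Lemma A.3, part of `lem_concentration_lem_shipra`): for a Markov chain `(S_t)` with transition
kernel `P`, per-step expected cost `c(s) ∈ [0,1]`, uniform gain `g` satisfying the Poisson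
equation `g = c(s) + ∫ v dP(s) - v(s)`, and bias span at most `H`, for any trajectory of length
`T` and any `δ > 0`, with probability at least `1 - δ`,
`|(1/T) ∑_{t=1}^T c(S_t) - g| ≤ H/T + H √(2 log(2/δ)/T)`. -/
theorem empirical_cost_concentration_poisson
    {Ω 𝒮 : Type*} {m : MeasurableSpace Ω} [MeasurableSpace 𝒮]
    {μ : Measure Ω} [IsProbabilityMeasure μ]
    (F : Filtration ℕ m)
    (P : ProbabilityTheory.Kernel 𝒮 𝒮) [IsMarkovKernel P]
    (S : ℕ → Ω → 𝒮) (hS : ∀ t, Measurable[F t] (S t))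
    (c v : 𝒮 → ℝ) (hc : Measurable c) (hv : Measurable v)
    (hc01 : ∀ s, c s ∈ Set.Icc (0 : ℝ) 1)
    (g H : ℝ) (hH : 0 < H)
    (hPoisson : ∀ s, g = c s + (∫ s', v s' ∂(P s)) - v s)
    (hspan : ∀ s s', |v s - v s'| ≤ H)
    (hMarkov : ∀ t, μ[fun ω => v (S (t + 1) ω) | F t]
      =ᵐ[μ] fun ω => ∫ s', v s' ∂(P (S t ω)))
    (T : ℕ) (hT : 0 < T) (δ : ℝ) (hδ : 0 < δ) :
    ENNReal.ofReal (1 - δ) ≤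
      μ {ω | |(1 / T : ℝ) * ∑ t ∈ Finset.Icc 1 T, c (S t ω) - g|
        ≤ H / T + H * Real.sqrt (2 * Real.log (2 / δ) / T)} := by
  -- trivial case δ ≥ 1
  rcases le_or_gt 1 δ with hδ1 | hδ1
  · rw [ENNReal.ofReal_of_nonpos (by linarith)]
    exact zero_le
  -- setup
  have hTpos : (0:ℝ) < T := Nat.cast_pos.mpr hT
  set L : ℝ := Real.log (2/δ) with hL
  have hLpos : 0 < L := Real.log_pos (by rw [lt_div_iff₀ hδ]; linarith)
  set ε : ℝ := H * Real.sqrt (2 * L * T) with hε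
  have hεpos : 0 < ε := by
    apply mul_pos hH
    apply Real.sqrt_pos.mpr
    positivity
  -- nonemptiness of 𝒮
  have hΩne : Nonempty Ω := by
    by_contra h
    rw [not_nonempty_iff] at h
    have h1 := measure_univ (μ := μ)
    rw [Set.univ_eq_empty_iff.mpr (by infer_instance), measure_empty] at h1
    exact zero_ne_one h1
  obtain ⟨ω₀⟩ := hΩne
  set s₀ : 𝒮 := S 0 ω₀ with hs₀
  set C : ℝ := |v s₀| + H with hC
  have hvC : ∀ s, |v s| ≤ C := by
    intro s
    calc |v s| = |v s₀ + (v s - v s₀)| := by ring_nf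
    _ ≤ |v s₀| + |v s - v s₀| := abs_add_le _ _
    _ ≤ C := by rw [hC]; linarith [hspan s s₀]
  -- integral of v against kernel
  set I : 𝒮 → ℝ := fun s => ∫ s', v s' ∂(P s) with hI
  have hvint : ∀ s, Integrable v (P s) := fun s => integrable_of_abs_bound hv C hvC
  have hIm : Measurable I := by
    have : StronglyMeasurable fun x => ∫ y, (fun (_ : 𝒮) (y : 𝒮) => v y) x y ∂(P x) :=
      MeasureTheory.StronglyMeasurable.integral_kernel_prod_right
        ((hv.comp measurable_snd).stronglyMeasurable)
    exact this.measurable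
  have hIC : ∀ s, |I s| ≤ C := by
    intro s
    rw [hI, ← Real.norm_eq_abs]
    calc ‖∫ s', v s' ∂(P s)‖ ≤ C * ((P s) Set.univ).toReal :=
      norm_integral_le_of_norm_le_const (ae_of_all _ (fun s' => by
        rw [Real.norm_eq_abs]; exact hvC s'))
    _ = C := by simp
  have hvI : ∀ x s, |v x - I s| ≤ H := by
    intro x s
    have heq : v x - I s = ∫ s', (v x - v s') ∂(P s) := by
      rw [integral_sub (integrable_const _) (hvint s), integral_const]
      simp
      rfl
    rw [heq, ← Real.norm_eq_abs]
    calc ‖∫ s', (v x - v s') ∂(P s)‖ ≤ H * ((P s) Set.univ).toReal :=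
      norm_integral_le_of_norm_le_const (ae_of_all _ (fun s' => by
        rw [Real.norm_eq_abs]; exact hspan x s'))
    _ = H := by simp
  -- shifted filtration and differences
  set G : Filtration ℕ m := ⟨fun n => F (n+1), fun a b hab => F.mono (by omega), fun n => F.le _⟩
    with hG
  set D : ℕ → Ω → ℝ := fun k ω => v (S (k+2) ω) - I (S (k+1) ω) with hD
  have hSm : ∀ t, Measurable (S t) := fun t => (hS t).mono (F.le t) le_rfl
  have hDmeas : ∀ k, Measurable[G (k+1)] (D k) := by
    intro k
    have h1 : Measurable[F (k+2)] (fun ω => v (S (k+2) ω)) := hv.comp (hS (k+2))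
    have h2 : Measurable[F (k+2)] (fun ω => I (S (k+1) ω)) :=
      (hIm.comp (hS (k+1))).mono (F.mono (by omega)) le_rfl
    exact h1.sub h2
  have hDbd : ∀ k ω, |D k ω| ≤ H := fun k ω => hvI _ _
  have hDcond : ∀ k, μ[D k | G k] =ᵐ[μ] 0 := by
    intro k
    have hint1 : Integrable (fun ω => v (S (k+2) ω)) μ :=
      integrable_of_abs_bound (hv.comp (hSm (k+2))) C (fun ω => hvC _)
    have hint2 : Integrable (fun ω => I (S (k+1) ω)) μ :=
      integrable_of_abs_bound (hIm.comp (hSm (k+1))) C (fun ω => hIC _)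
    have hsub : μ[D k | F (k+1)] =ᵐ[μ]
        μ[fun ω => v (S (k+2) ω) | F (k+1)] - μ[fun ω => I (S (k+1) ω) | F (k+1)] :=
      condExp_sub hint1 hint2 _
    have h1 : μ[fun ω => v (S (k+2) ω) | F (k+1)] =ᵐ[μ] fun ω => I (S (k+1) ω) :=
      hMarkov (k+1)
    have h2 : μ[fun ω => I (S (k+1) ω) | F (k+1)] = fun ω => I (S (k+1) ω) :=
      condExp_of_stronglyMeasurable (F.le (k+1))
        ((hIm.comp (hS (k+1))).stronglyMeasurable) hint2
    show μ[D k | F (k+1)] =ᵐ[μ] 0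
    filter_upwards [hsub, h1] with ω hω h1ω
    simp only [Pi.sub_apply] at hω
    rw [hω, h1ω, congrFun h2 ω]
    simp
  -- Azuma both tails
  set M : Ω → ℝ := fun ω => ∑ k ∈ range T, D k ω with hM
  have hMm : Measurable M := Finset.measurable_sum _
    (fun k _ => (hDmeas k).mono (G.le _) le_rfl)
  have hexp : Real.exp (-(ε^2) / (2 * T * H^2)) = δ/2 := by
    have : -(ε^2) / (2 * T * H^2) = -L := by
      rw [hε, mul_pow, Real.sq_sqrt (by positivity)]
      field_simp
    rw [this, hL, ← Real.log_inv, Real.exp_log (by positivity)]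
    rw [inv_div]
  have htail1 : (μ {ω | ε ≤ M ω}).toReal ≤ δ/2 := by
    rw [← hexp]
    exact azuma_tail G D H hH hDmeas hDbd hDcond T hT ε hεpos
  have htail2 : (μ {ω | ε ≤ -M ω}).toReal ≤ δ/2 := by
    rw [← hexp]
    have h := azuma_tail G (fun k ω => -(D k ω)) H hH
      (fun k => (hDmeas k).neg) (fun k ω => by rw [abs_neg]; exact hDbd k ω)
      (fun k => by
        have hneg := condExp_neg (D k) (m := G k) (μ := μ)
        refine hneg.trans ?_
        filter_upwards [hDcond k] with ω hω
        simp only [Pi.neg_apply] at *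
        simp [hω]) T hT ε hεpos
    have hset : {ω | ε ≤ -M ω} = {ω | ε ≤ ∑ k ∈ range T, -(D k ω)} := by
      ext ω
      simp [hM]
    rw [hset]
    exact h
  -- union bound
  have hAm : MeasurableSet {ω | ε ≤ M ω} := measurableSet_le measurable_const hMm
  have hBm : MeasurableSet {ω | ε ≤ -M ω} := measurableSet_le measurable_const hMm.neg
  have hbad : μ {ω | ¬ (|M ω| ≤ ε)} ≤ ENNReal.ofReal δ := by
    have hsub : {ω | ¬ (|M ω| ≤ ε)} ⊆ {ω | ε ≤ M ω} ∪ {ω | ε ≤ -M ω} := by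
      intro ω hω
      simp only [Set.mem_setOf_eq, not_le] at hω
      simp only [Set.mem_union, Set.mem_setOf_eq]
      rcases le_or_gt 0 (M ω) with h | h
      · left; rw [abs_of_nonneg h] at hω; exact hω.le
      · right; rw [abs_of_neg h] at hω; exact hω.le
    calc μ {ω | ¬ (|M ω| ≤ ε)} ≤ μ ({ω | ε ≤ M ω} ∪ {ω | ε ≤ -M ω}) := measure_mono hsub
    _ ≤ μ {ω | ε ≤ M ω} + μ {ω | ε ≤ -M ω} := measure_union_le _ _
    _ ≤ ENNReal.ofReal (δ/2) + ENNReal.ofReal (δ/2) := by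
        gcongr
        · exact (ENNReal.le_ofReal_iff_toReal_le (measure_ne_top μ _) (by positivity)).mpr htail1
        · exact (ENNReal.le_ofReal_iff_toReal_le (measure_ne_top μ _) (by positivity)).mpr htail2
    _ = ENNReal.ofReal δ := by
        rw [← ENNReal.ofReal_add (by positivity) (by positivity)]
        norm_num
  have hgood : ENNReal.ofReal (1 - δ) ≤ μ {ω | |M ω| ≤ ε} := by
    have hGm : MeasurableSet {ω | |M ω| ≤ ε} := measurableSet_le hMm.abs measurable_const
    have h1 : (1:ENNReal) ≤ μ {ω | |M ω| ≤ ε} + ENNReal.ofReal δ := by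
      calc (1:ENNReal) = μ Set.univ := (measure_univ).symm
      _ = μ ({ω | |M ω| ≤ ε} ∪ {ω | ¬ (|M ω| ≤ ε)}) := by
          congr 1
          ext ω
          simp only [Set.mem_union, Set.mem_setOf_eq, Set.mem_univ, true_iff]
          exact (le_or_gt _ _).imp id not_le.mpr
      _ ≤ μ {ω | |M ω| ≤ ε} + μ {ω | ¬ (|M ω| ≤ ε)} := measure_union_le _ _
      _ ≤ μ {ω | |M ω| ≤ ε} + ENNReal.ofReal δ := by gcongr
    have h2 : ENNReal.ofReal (1-δ) + ENNReal.ofReal δ ≤ μ {ω | |M ω| ≤ ε} + ENNReal.ofReal δ := by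
      rw [← ENNReal.ofReal_add (by linarith) hδ.le]
      simpa using h1
    exact (ENNReal.add_le_add_iff_right ENNReal.ofReal_ne_top).mp h2
  refine hgood.trans (measure_mono ?_)
  -- deterministic inclusion
  intro ω hω
  simp only [Set.mem_setOf_eq] at hω ⊢
  -- telescoping identity
  have hid : ∑ t ∈ Finset.Icc 1 T, c (S t ω) - T * g
      = (v (S 1 ω) - v (S (T+1) ω)) + M ω := by
    have h1 : ∑ t ∈ Finset.Icc 1 T, c (S t ω) - T * g
        = ∑ t ∈ Finset.Icc 1 T, (c (S t ω) - g) := by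
      rw [Finset.sum_sub_distrib, Finset.sum_const, Nat.card_Icc]
      simp [mul_comm]
    rw [h1]
    have h2 : ∀ s, c s - g = v s - I s := by
      intro s
      have := hPoisson s
      rw [hI]
      linarith
    calc ∑ t ∈ Finset.Icc 1 T, (c (S t ω) - g)
        = ∑ t ∈ Finset.Icc 1 T, (v (S t ω) - I (S t ω)) := by
          exact Finset.sum_congr rfl (fun t _ => h2 _)
    _ = ∑ k ∈ range T, (v (S (k+1) ω) - I (S (k+1) ω)) := by
          rw [← Finset.Ico_add_one_right_eq_Icc, Finset.sum_Ico_eq_sum_range]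
          simp [add_comm]
    _ = ∑ k ∈ range T, ((v (S (k+1) ω) - v (S (k+2) ω)) + D k ω) := by
          apply Finset.sum_congr rfl
          intro k _
          rw [hD]; ring
    _ = (∑ k ∈ range T, (v (S (k+1) ω) - v (S (k+2) ω))) + M ω := Finset.sum_add_distrib
    _ = (v (S 1 ω) - v (S (T+1) ω)) + M ω := by
          congr 1
          exact Finset.sum_range_sub' (fun k => v (S (k+1) ω)) T
  have habs : |∑ t ∈ Finset.Icc 1 T, c (S t ω) - T * g| ≤ H + ε := by
    rw [hid]
    calc |(v (S 1 ω) - v (S (T+1) ω)) + M ω| ≤ |v (S 1 ω) - v (S (T+1) ω)| + |M ω| := abs_add_le _ _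
    _ ≤ H + ε := add_le_add (hspan _ _) hω
  -- final arithmetic
  have hεT : ε / T = H * Real.sqrt (2 * L / T) := by
    rw [hε]
    rw [show (2 * L / T : ℝ) = 2 * L * T / T^2 by field_simp]
    rw [Real.sqrt_div (by positivity), Real.sqrt_sq hTpos.le]
    field_simp
  have hrw : (1 / T : ℝ) * ∑ t ∈ Finset.Icc 1 T, c (S t ω) - g
      = (∑ t ∈ Finset.Icc 1 T, c (S t ω) - T * g) / T := by
    field_simp
  rw [hrw, abs_div, abs_of_pos hTpos]
  calc |∑ t ∈ Finset.Icc 1 T, c (S t ω) - T * g| / T ≤ (H + ε) / T := by gcongr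
  _ = H / T + ε / T := by ring
  _ = H / T + H * Real.sqrt (2 * L / T) := by rw [hεT]
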